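/- arXiv:1601.05061 — 2 statements merged into one kernel-verified Lean document; each statement's English description precedes it below -/
import Mathlib

section
/- Let J : ℝ → ℝ be bounded and locally integrable, with ergodic average ⟨J⟩ = lim_{T→∞} (1/T)∫₀ᵀ J(t) dt existing. Let w : [0,1] → ℝ be continuously differentiable with w(0) = w(1) = 0, and write w̄ = ∫₀¹ w(s) ds. Let τ̌ : (0,∞) → ℝ be such that š = lim_{T→∞} τ̌(T)/T exists. Then lim_{T→∞} (1/T)∫₀ᵀ w'(t/T) · ((t − τ̌(T))/T) · J(t) dt = −w̄ · ⟨J⟩. -/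
/-!
Substituting `t = T s` turns the average into `∫₀¹ w'(s) (s - τ(T)/T) J(T s) ds`. The rescaled
signals `J(T ·)` converge weakly on `[0,1]` to the constant `⟨J⟩`: against the indicator of
`[0,u]` this is the hypothesis on the ergodic average, and since `J` is bounded, approximating a
continuous test function uniformly by step functions passes it to every continuous test function.
Testing against `s w'(s)` and `w'(s)`, whose integrals are `-w̄` (integration by parts) and
`w 1 - w 0 = 0`, gives the limit `-w̄ ⟨J⟩ - š · 0`.
-/

open MeasureTheory Filter Set Topology

theorem tendsto_of_forall_approx {α E : Type*} [PseudoMetricSpace E] {l : Filter α}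
    {f : α → E} {a : E}
    (h : ∀ ε > 0, ∃ g : α → E, ∃ b, Tendsto g l (𝓝 b) ∧ dist b a ≤ ε ∧
      ∀ᶠ x in l, dist (f x) (g x) ≤ ε) :
    Tendsto f l (𝓝 a) := by
  refine Metric.tendsto_nhds.2 fun ε hε => ?_
  obtain ⟨g, b, hgb, hba, hfg⟩ := h (ε / 3) (by positivity)
  filter_upwards [Metric.tendsto_nhds.1 hgb (ε / 3) (by positivity), hfg] with x hgx hfx
  calc dist (f x) a ≤ dist (f x) (g x) + dist (g x) b + dist b a := dist_triangle4 _ _ _ _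
    _ < ε := by linarith

theorem one_div_mul_integral_eq_integral_comp_mul_left (f : ℝ → ℝ) {T : ℝ} (hT : T ≠ 0) :
    1 / T * ∫ t in (0:ℝ)..T, f t = ∫ s in (0:ℝ)..1, f (T * s) := by
  rw [intervalIntegral.integral_comp_mul_left f hT, mul_zero, mul_one, smul_eq_mul, one_div]

theorem MeasureTheory.LocallyIntegrable.intervalIntegrable_comp_mul_left {J : ℝ → ℝ}
    (hJ : LocallyIntegrable J) {T : ℝ} (hT : T ≠ 0) (a b : ℝ) :
    IntervalIntegrable (fun s => J (T * s)) volume a b := by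
  have := ((hJ.integrableOn_isCompact isCompact_uIcc).intervalIntegrable (a := T * a)
    (b := T * b)).comp_mul_left (c := T)
  simpa [mul_div_cancel_left₀ _ hT] using this

theorem abs_integral_mul_sub_const_mul_le {v K : ℝ → ℝ} {a b c δ B : ℝ} (hab : a ≤ b)
    (hvK : IntervalIntegrable (fun s => v s * K s) volume a b)
    (hK : IntervalIntegrable K volume a b)
    (hvc : ∀ s ∈ Icc a b, |v s - c| ≤ δ) (hKB : ∀ s ∈ Icc a b, |K s| ≤ B) :
    |(∫ s in a..b, v s * K s) - c * ∫ s in a..b, K s| ≤ δ * B * (b - a) := by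
  rw [← intervalIntegral.integral_const_mul, ← intervalIntegral.integral_sub hvK (hK.const_mul c)]
  have := intervalIntegral.norm_integral_le_of_norm_le_const (a := a) (b := b) (C := δ * B)
    (f := fun s => v s * K s - c * K s) fun s hs => by
      rw [uIoc_of_le hab] at hs
      have hs := Ioc_subset_Icc_self hs
      rw [Real.norm_eq_abs, ← sub_mul, abs_mul]
      exact mul_le_mul (hvc s hs) (hKB s hs) (abs_nonneg _) ((abs_nonneg _).trans (hvc s hs))
  rwa [Real.norm_eq_abs, abs_of_nonneg (sub_nonneg.2 hab)] at this

theorem abs_integral_mul_sub_sum_le {v K : ℝ → ℝ} {n : ℕ} {δ B : ℝ} (hn : 0 < n)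
    (hv : ContinuousOn v (Icc 0 1)) (hK : IntervalIntegrable K volume 0 1)
    (hKB : ∀ s ∈ Icc (0:ℝ) 1, |K s| ≤ B)
    (hvδ : ∀ s ∈ Icc (0:ℝ) 1, ∀ t ∈ Icc (0:ℝ) 1, |s - t| ≤ 1 / n → |v s - v t| ≤ δ) :
    |(∫ s in (0:ℝ)..1, v s * K s) -
        ∑ k ∈ Finset.range n, v (k / n) * ∫ s in (k / n : ℝ)..((k + 1) / n), K s| ≤ δ * B := by
  have hn' : (0 : ℝ) < n := Nat.cast_pos.2 hn
  have hsub : ∀ k < n, Icc ((k : ℝ) / n) ((k + 1) / n) ⊆ Icc 0 1 := fun k hk =>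
    Icc_subset_Icc (by positivity) ((div_le_one hn').2 (by exact_mod_cast hk))
  have hstep : ∀ k : ℕ, ((k : ℝ) + 1) / n - k / n = 1 / n := fun k => by ring
  have hmono : ∀ k : ℕ, (k : ℝ) / n ≤ (k + 1) / n := fun k => by gcongr; linarith
  have hvK : IntervalIntegrable (fun s => v s * K s) volume 0 1 :=
    hK.continuousOn_mul (by rwa [uIcc_of_le zero_le_one])
  have hrestrict : ∀ {f : ℝ → ℝ}, IntervalIntegrable f volume 0 1 → ∀ k < n,
      IntervalIntegrable f volume ((k : ℝ) / n) ((k + 1) / n) := fun hf k hk =>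
    hf.mono_set (by rw [uIcc_of_le zero_le_one, uIcc_of_le (hmono k)]; exact hsub k hk)
  have hsplit := intervalIntegral.sum_integral_adjacent_intervals (a := fun k : ℕ => (k : ℝ) / n)
    (n := n) (f := fun s => v s * K s) (μ := volume) fun k hk => by
      simpa [Nat.cast_succ] using hrestrict hvK k hk
  simp only [Nat.cast_zero, zero_div, Nat.cast_succ, div_self hn'.ne'] at hsplit
  rw [← hsplit, ← Finset.sum_sub_distrib]
  calc _ ≤ ∑ k ∈ Finset.range n, δ * B * ((k + 1) / n - k / n) :=
        (Finset.abs_sum_le_sum_abs _ _).trans <| Finset.sum_le_sum fun k hk => by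
          have hk := Finset.mem_range.1 hk
          refine abs_integral_mul_sub_const_mul_le (hmono k) (hrestrict hvK k hk)
            (hrestrict hK k hk) (fun s hs => hvδ s (hsub k hk hs) _
              (hsub k hk ⟨le_rfl, hmono k⟩) ?_) fun s hs => hKB s (hsub k hk hs)
          rw [abs_of_nonneg (sub_nonneg.2 hs.1)]
          linarith [hs.2, hstep k]
    _ = δ * B := by
      simp only [hstep, Finset.sum_const, Finset.card_range, nsmul_eq_mul]
      field_simp

theorem integral_eq_sub_of_hasDerivWithinAt_Icc {f f' : ℝ → ℝ} {a b : ℝ} (hab : a ≤ b)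
    (hf : ∀ x ∈ Icc a b, HasDerivWithinAt f (f' x) (Icc a b) x)
    (hf' : IntervalIntegrable f' volume a b) :
    ∫ x in a..b, f' x = f b - f a :=
  intervalIntegral.integral_eq_sub_of_hasDerivAt_of_le hab
    (fun x hx => (hf x hx).continuousWithinAt)
    (fun x hx => (hf x (Ioo_subset_Icc_self hx)).hasDerivAt (Icc_mem_nhds hx.1 hx.2)) hf'

section ErgodicAverage

variable {J : ℝ → ℝ} {LJ : ℝ}

theorem tendsto_primitive_comp_mul_left_of_tendsto_average
    (hJ : Tendsto (fun T : ℝ => (1 / T) * ∫ t in (0:ℝ)..T, J t) atTop (𝓝 LJ))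
    {u : ℝ} (hu : 0 ≤ u) :
    Tendsto (fun T => ∫ s in (0:ℝ)..u, J (T * s)) atTop (𝓝 (u * LJ)) := by
  rcases hu.eq_or_lt with rfl | hu
  · simp
  have h := (hJ.comp (tendsto_id.atTop_mul_const hu)).const_mul u
  refine h.congr' ?_
  filter_upwards [eventually_gt_atTop 0] with T hT
  simp only [Function.comp_apply, id,
    one_div_mul_integral_eq_integral_comp_mul_left _ (mul_pos hT hu).ne', mul_assoc,
    intervalIntegral.integral_comp_mul_left (fun s => J (T * s)) hu.ne', mul_zero, mul_one,
    smul_eq_mul, mul_inv_cancel_left₀ hu.ne']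

theorem tendsto_intervalIntegral_comp_mul_left_of_tendsto_average (hJloc : LocallyIntegrable J)
    (hJ : Tendsto (fun T : ℝ => (1 / T) * ∫ t in (0:ℝ)..T, J t) atTop (𝓝 LJ))
    {a b : ℝ} (ha : 0 ≤ a) (hb : 0 ≤ b) :
    Tendsto (fun T => ∫ s in a..b, J (T * s)) atTop (𝓝 ((b - a) * LJ)) := by
  rw [sub_mul]
  refine ((tendsto_primitive_comp_mul_left_of_tendsto_average hJ hb).sub
    (tendsto_primitive_comp_mul_left_of_tendsto_average hJ ha)).congr' ?_
  filter_upwards [eventually_gt_atTop 0] with T hT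
  exact intervalIntegral.integral_interval_sub_left
    (hJloc.intervalIntegrable_comp_mul_left hT.ne' _ _)
    (hJloc.intervalIntegrable_comp_mul_left hT.ne' _ _)

theorem tendsto_integral_mul_comp_mul_left {B : ℝ} (hB : ∀ t, |J t| ≤ B)
    (hJloc : LocallyIntegrable J)
    (hJ : Tendsto (fun T : ℝ => (1 / T) * ∫ t in (0:ℝ)..T, J t) atTop (𝓝 LJ))
    {v : ℝ → ℝ} (hv : ContinuousOn v (Icc 0 1)) :
    Tendsto (fun T => ∫ s in (0:ℝ)..1, v s * J (T * s)) atTop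
      (𝓝 ((∫ s in (0:ℝ)..1, v s) * LJ)) := by
  have hB0 : 0 ≤ B := (abs_nonneg _).trans (hB 0)
  refine tendsto_of_forall_approx fun ε hε => ?_
  set δ := ε / (B + |LJ| + 1)
  have hδ : 0 < δ := by positivity
  have hδle : ∀ C, 0 ≤ C → C ≤ B + |LJ| → δ * C ≤ ε := fun C hC0 hC => by
    rw [div_mul_eq_mul_div, div_le_iff₀ (by positivity)]
    nlinarith
  obtain ⟨η, hη, hvη⟩ := Metric.uniformContinuousOn_iff_le.1
    (isCompact_Icc.uniformContinuousOn_of_continuous hv) δ hδ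
  obtain ⟨m, hm⟩ := exists_nat_one_div_lt hη
  set n := m + 1
  have hvδ : ∀ s ∈ Icc (0:ℝ) 1, ∀ t ∈ Icc (0:ℝ) 1, |s - t| ≤ 1 / n → |v s - v t| ≤ δ :=
    fun s hs t ht hst => hvη s hs t ht (hst.trans (by push_cast [n]; exact hm.le))
  have hpart : ∀ k ∈ Finset.range n, Tendsto (fun T => ∫ s in (k / n : ℝ)..((k + 1) / n),
      J (T * s)) atTop (𝓝 (((k + 1) / n - k / n) * LJ)) := fun k _ =>
    tendsto_intervalIntegral_comp_mul_left_of_tendsto_average hJloc hJ (by positivity)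
      (by positivity)
  refine ⟨_, _, tendsto_finsetSum _ fun k hk => (hpart k hk).const_mul (v (k / n)), ?_, ?_⟩
  · have h := abs_integral_mul_sub_sum_le (K := fun _ => 1) (B := 1) (show 0 < n from m.succ_pos)
      hv intervalIntegrable_const (fun _ _ => by simp) hvδ
    simp only [mul_one, intervalIntegral.integral_const, smul_eq_mul] at h
    simp only [← mul_assoc, ← Finset.sum_mul]
    rw [Real.dist_eq, ← sub_mul, abs_mul, abs_sub_comm]
    exact (mul_le_mul_of_nonneg_right h (abs_nonneg LJ)).trans
      (hδle |LJ| (abs_nonneg _) (by linarith))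
  · filter_upwards [eventually_gt_atTop 0] with T hT
    rw [Real.dist_eq]
    exact (abs_integral_mul_sub_sum_le (show 0 < n from m.succ_pos) hv
      (hJloc.intervalIntegrable_comp_mul_left hT.ne' 0 1) (fun s _ => hB _) hvδ).trans
      (hδle B hB0 (by linarith [abs_nonneg LJ]))

end ErgodicAverage

theorem one_div_mul_integral_window_eq {J w' : ℝ → ℝ} {T : ℝ} (hT : T ≠ 0) (c : ℝ)
    (hJ : IntervalIntegrable (fun s => J (T * s)) volume 0 1)
    (hw' : ContinuousOn w' (Icc 0 1)) :
    1 / T * ∫ t in (0:ℝ)..T, w' (t / T) * ((t - c) / T) * J t =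
      (∫ s in (0:ℝ)..1, s * w' s * J (T * s)) - c / T * ∫ s in (0:ℝ)..1, w' s * J (T * s) := by
  have hw' : ContinuousOn w' (uIcc 0 1) := by rwa [uIcc_of_le zero_le_one]
  have h₁ : IntervalIntegrable (fun s => s * w' s * J (T * s)) volume 0 1 :=
    hJ.continuousOn_mul (continuousOn_id.mul hw')
  rw [one_div_mul_integral_eq_integral_comp_mul_left _ hT, ← intervalIntegral.integral_const_mul,
    ← intervalIntegral.integral_sub h₁ ((hJ.continuousOn_mul hw').const_mul _)]
  refine intervalIntegral.integral_congr fun s _ => ?_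
  simp only [mul_div_cancel_left₀ _ hT]
  field_simp

/-- Lemma 4: if `J` is bounded, locally integrable, with ergodic average `⟨J⟩ = LJ`,
`w` is continuously differentiable on `[0,1]` (with derivative `w'`) and
`w 0 = w 1 = 0`, and `tau : (0,∞) → ℝ` is such that `š = lim_{T→∞} tau T / T` exists,
then `lim_{T→∞} (1/T)∫₀ᵀ w'(t/T)·((t − tau T)/T)·J(t) dt = −w̄·⟨J⟩`
where `w̄ = ∫₀¹ w`. -/
theorem windowed_derivative_average_eq_neg_mean_mul_average
    (J w w' : ℝ → ℝ) (tau : ℝ → ℝ) (LJ sc : ℝ)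
    (hJb : ∃ B : ℝ, ∀ t : ℝ, |J t| ≤ B)
    (hJloc : LocallyIntegrable J)
    (hJ : Tendsto (fun T : ℝ => (1 / T) * ∫ t in (0:ℝ)..T, J t) atTop (nhds LJ))
    (hw : ∀ s ∈ Icc (0:ℝ) 1, HasDerivWithinAt w (w' s) (Icc (0:ℝ) 1) s)
    (hw'c : ContinuousOn w' (Icc (0:ℝ) 1))
    (hw0 : w 0 = 0) (hw1 : w 1 = 0)
    (htau : Tendsto (fun T : ℝ => tau T / T) atTop (nhds sc)) :
    Tendsto (fun T : ℝ =>
        (1 / T) * ∫ t in (0:ℝ)..T, w' (t / T) * ((t - tau T) / T) * J t)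
      atTop (nhds (-(∫ s in (0:ℝ)..1, w s) * LJ)) := by
  obtain ⟨B, hB⟩ := hJb
  have hw'int : IntervalIntegrable w' volume 0 1 :=
    (hw'c.mono (uIcc_of_le zero_le_one).subset).intervalIntegrable
  have hmean : ∫ s in (0:ℝ)..1, w' s = 0 := by
    rw [integral_eq_sub_of_hasDerivWithinAt_Icc zero_le_one hw hw'int, hw0, hw1, sub_zero]
  have hmoment : ∫ s in (0:ℝ)..1, s * w' s = -∫ s in (0:ℝ)..1, w s := by
    have := intervalIntegral.integral_mul_deriv_eq_deriv_mul_of_hasDerivWithinAt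
      (u := id) (u' := fun _ => 1) (fun x _ => hasDerivWithinAt_id x _)
      (by simpa only [uIcc_of_le zero_le_one] using hw) intervalIntegrable_const hw'int
    simpa [hw1] using this
  have hlim := (tendsto_integral_mul_comp_mul_left hB hJloc hJ
    (v := fun s => s * w' s) (continuousOn_id.mul hw'c)).sub
    (htau.mul (tendsto_integral_mul_comp_mul_left hB hJloc hJ hw'c))
  rw [hmoment, hmean, zero_mul, mul_zero, sub_zero] at hlim
  refine hlim.congr' ?_
  filter_upwards [eventually_gt_atTop 0] with T hT
  exact (one_div_mul_integral_window_eq hT.ne' _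
    (hJloc.intervalIntegrable_comp_mul_left hT.ne' 0 1) hw'c).symm
end

section
/- Let η : ℝ → ℝ be bounded and locally integrable with ergodic average ⟨η⟩ = lim_{T→∞} (1/T)∫₀ᵀ η(τ) dτ existing, let J : ℝ → ℝ be bounded and locally integrable, let w : [0,1] → ℝ be continuously differentiable, and let τ̌ : (0,∞) → ℝ satisfy 0 ≤ τ̌(T) ≤ T for all T. Then lim_{T→∞} [ (1/T)∫₀ᵀ w'(t/T)·(1/T)(∫_{τ̌(T)}^{t} η(τ) dτ)·J(t) dt − ⟨η⟩·(1/T)∫₀ᵀ w'(t/T)·((t − τ̌(T))/T)·J(t) dt ] = 0. -/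
open MeasureTheory Filter Set

/-!
Put `G t = ∫₀ᵗ η − ⟨η⟩ t`. The difference of the two windowed integrals is the single windowed
integral of `w'(t/T) · (G t − G (τ̌ T))/T · J t`. The existence of the ergodic average says
`G T = o(T)`, and since `G` is continuous this upgrades to `sup_{[0,T]} |G| = o(T)`; the
integrand is therefore uniformly `o(1)` on `[0,T]`, and so is its average.
-/

lemma MeasureTheory.LocallyIntegrable.intervalIntegrable {E : Type*} [NormedAddCommGroup E]
    {f : ℝ → E} (hf : LocallyIntegrable f) (a b : ℝ) : IntervalIntegrable f volume a b :=
  (hf.integrableOn_isCompact isCompact_uIcc).intervalIntegrable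

lemma tendsto_nhds_zero_of_forall_eventually_abs_le_mul {α : Type*} {l : Filter α}
    {f : α → ℝ} (K : ℝ) (h : ∀ ε > 0, ∀ᶠ x in l, |f x| ≤ K * ε) : Tendsto f l (nhds 0) := by
  rw [Metric.tendsto_nhds]
  intro ε hε
  have hK : 0 < |K| + 1 := by positivity
  filter_upwards [h (ε / 2 / (|K| + 1)) (by positivity)] with x hx
  rw [Real.dist_eq, sub_zero]
  calc |f x| ≤ K * (ε / 2 / (|K| + 1)) := hx
    _ ≤ (|K| + 1) * (ε / 2 / (|K| + 1)) := by gcongr; linarith [le_abs_self K]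
    _ < ε := by rw [mul_div_cancel₀ _ hK.ne']; linarith

lemma tendsto_sub_mul_div_atTop {F : ℝ → ℝ} {L : ℝ}
    (h : Tendsto (fun T => (1 / T) * F T) atTop (nhds L)) :
    Tendsto (fun T => (F T - L * T) / T) atTop (nhds 0) := by
  refine (tendsto_sub_nhds_zero_iff.2 h).congr' ?_
  filter_upwards [eventually_ne_atTop 0] with T hT
  field_simp

lemma eventually_forall_Icc_abs_le_mul {G : ℝ → ℝ} (hGc : Continuous G)
    (hG : Tendsto (fun T => G T / T) atTop (nhds 0)) {ε : ℝ} (hε : 0 < ε) :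
    ∀ᶠ T in atTop, ∀ s ∈ Icc 0 T, |G s| ≤ ε * T := by
  have hlarge : ∀ᶠ s in atTop, |G s| ≤ ε * s := by
    filter_upwards [hG.eventually (Metric.closedBall_mem_nhds 0 hε), eventually_gt_atTop 0]
      with s hs hs0
    rwa [Real.dist_eq, sub_zero, abs_div, abs_of_pos hs0, div_le_iff₀ hs0] at hs
  obtain ⟨S, hS⟩ := eventually_atTop.1 hlarge
  obtain ⟨M, hM⟩ := (isCompact_Icc (a := 0) (b := S)).exists_bound_of_continuousOn
    hGc.continuousOn
  filter_upwards [eventually_ge_atTop S, eventually_ge_atTop (M / ε)] with T hTS hTM s hs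
  rcases le_or_gt S s with hSs | hsS
  · exact (hS s hSs).trans (by gcongr; exact hs.2)
  · calc |G s| ≤ M := hM s ⟨hs.1, hsS.le⟩
      _ ≤ ε * T := by rwa [div_le_iff₀ hε, mul_comm] at hTM

lemma abs_average_intervalIntegral_le {f : ℝ → ℝ} {T K : ℝ} (hT : 0 < T)
    (hf : ∀ t ∈ Ioc 0 T, |f t| ≤ K) : |(1 / T) * ∫ t in (0 : ℝ)..T, f t| ≤ K := by
  have h := intervalIntegral.norm_integral_le_of_norm_le_const (a := 0) (b := T)
    fun t ht => (Real.norm_eq_abs _).trans_le (hf t (by rwa [uIoc_of_le hT.le] at ht))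
  rw [Real.norm_eq_abs, sub_zero, abs_of_pos hT] at h
  rw [abs_mul, abs_of_pos (one_div_pos.2 hT), one_div, inv_mul_le_iff₀ hT, mul_comm]
  exact h

lemma abs_intervalIntegral_sub_mul_le {η : ℝ → ℝ} {T L δ a b : ℝ}
    (hη : ∀ a b, IntervalIntegrable η volume a b)
    (hδ : ∀ s ∈ Icc 0 T, |(∫ r in (0 : ℝ)..s, η r) - L * s| ≤ δ)
    (ha : a ∈ Icc 0 T) (hb : b ∈ Icc 0 T) :
    |(∫ r in a..b, η r) - L * (b - a)| ≤ 2 * δ := by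
  have hshift : (∫ r in a..b, η r) - L * (b - a)
      = ((∫ r in (0 : ℝ)..b, η r) - L * b) - ((∫ r in (0 : ℝ)..a, η r) - L * a) := by
    rw [← intervalIntegral.integral_interval_sub_left (hη 0 b) (hη 0 a)]
    ring
  rw [hshift]
  linarith [abs_sub ((∫ r in (0 : ℝ)..b, η r) - L * b) ((∫ r in (0 : ℝ)..a, η r) - L * a),
    hδ a ha, hδ b hb]

lemma intervalIntegrable_window_mul {w' f J : ℝ → ℝ} {T : ℝ} (hT : 0 < T)
    (hw' : ContinuousOn w' (Icc 0 1)) (hf : Continuous f) (hJ : IntervalIntegrable J volume 0 T) :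
    IntervalIntegrable (fun t => w' (t / T) * f t * J t) volume 0 T := by
  refine hJ.continuousOn_mul (ContinuousOn.mul ?_ hf.continuousOn)
  rw [uIcc_of_le hT.le]
  refine hw'.comp (continuous_id.div_const T).continuousOn fun t ht => ?_
  exact ⟨div_nonneg ht.1 hT.le, (div_le_one hT).2 ht.2⟩

lemma windowed_dilation_sub_linear_eq {η J w' : ℝ → ℝ} {T : ℝ} (hT : 0 < T)
    (hη : ∀ a b, IntervalIntegrable η volume a b) (hJ : IntervalIntegrable J volume 0 T)
    (hw' : ContinuousOn w' (Icc 0 1)) (τ L : ℝ) :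
    (1 / T) * (∫ t in (0 : ℝ)..T, w' (t / T) * ((1 / T) * ∫ s in τ..t, η s) * J t)
        - L * ((1 / T) * ∫ t in (0 : ℝ)..T, w' (t / T) * ((t - τ) / T) * J t)
      = (1 / T) * ∫ t in (0 : ℝ)..T,
          w' (t / T) * (((∫ s in τ..t, η s) - L * (t - τ)) / T) * J t := by
  have hprim : Continuous fun t => (1 / T) * ∫ s in τ..t, η s :=
    continuous_const.mul (intervalIntegral.continuous_primitive hη τ)
  have hlin : Continuous fun t : ℝ => (t - τ) / T := by fun_prop
  have hsplit : ∀ t, w' (t / T) * (((∫ s in τ..t, η s) - L * (t - τ)) / T) * J t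
      = w' (t / T) * ((1 / T) * ∫ s in τ..t, η s) * J t
        - L * (w' (t / T) * ((t - τ) / T) * J t) := fun t => by ring
  simp only [hsplit]
  rw [intervalIntegral.integral_sub (intervalIntegrable_window_mul hT hw' hprim hJ)
    ((intervalIntegrable_window_mul hT hw' hlin hJ).const_mul L),
    intervalIntegral.integral_const_mul]
  ring

theorem windowed_integral_replace_dilation_by_linear_general
    (η J w' : ℝ → ℝ) (tau : ℝ → ℝ) (Lη : ℝ)
    (hηloc : LocallyIntegrable η)
    (hη : Tendsto (fun T : ℝ => (1 / T) * ∫ τ in (0:ℝ)..T, η τ) atTop (nhds Lη))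
    (hJb : ∃ B : ℝ, ∀ t : ℝ, |J t| ≤ B)
    (hJloc : LocallyIntegrable J)
    (hw'c : ContinuousOn w' (Icc (0:ℝ) 1))
    (htau0 : ∀ T : ℝ, 0 < T → 0 ≤ tau T ∧ tau T ≤ T) :
    Tendsto (fun T : ℝ =>
        (1 / T) * (∫ t in (0:ℝ)..T,
            w' (t / T) * ((1 / T) * ∫ τ in tau T..t, η τ) * J t)
          - Lη * ((1 / T) * ∫ t in (0:ℝ)..T, w' (t / T) * ((t - tau T) / T) * J t))
      atTop (nhds 0) := by
  obtain ⟨B, hB⟩ := hJb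
  obtain ⟨C, hC⟩ := isCompact_Icc.exists_bound_of_continuousOn hw'c
  set G : ℝ → ℝ := fun t => (∫ s in (0 : ℝ)..t, η s) - Lη * t
  have hGc : Continuous G := by
    have := intervalIntegral.continuous_primitive hηloc.intervalIntegrable 0
    fun_prop
  refine tendsto_nhds_zero_of_forall_eventually_abs_le_mul (C * 2 * B) fun ε hε => ?_
  filter_upwards [eventually_forall_Icc_abs_le_mul hGc (tendsto_sub_mul_div_atTop hη) hε,
    eventually_gt_atTop 0] with T hGT hT
  rw [windowed_dilation_sub_linear_eq hT hηloc.intervalIntegrable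
    (hJloc.intervalIntegrable 0 T) hw'c]
  refine abs_average_intervalIntegral_le hT fun t ht => ?_
  have hwin : |w' (t / T)| ≤ C :=
    (Real.norm_eq_abs _).symm.trans_le (hC _ ⟨div_nonneg ht.1.le hT.le, (div_le_one hT).2 ht.2⟩)
  have hC0 : 0 ≤ C := (abs_nonneg _).trans hwin
  have hdil : |((∫ s in tau T..t, η s) - Lη * (t - tau T)) / T| ≤ 2 * ε := by
    rw [abs_div, abs_of_pos hT, div_le_iff₀ hT, mul_assoc]
    exact abs_intervalIntegral_sub_mul_le hηloc.intervalIntegrable hGT (htau0 T hT)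
      ⟨ht.1.le, ht.2⟩
  calc _ = |w' (t / T)| * |((∫ s in tau T..t, η s) - Lη * (t - tau T)) / T| * |J t| := by
        rw [abs_mul, abs_mul]
    _ ≤ C * (2 * ε) * B := by
        gcongr
        exact hB t
    _ = C * 2 * B * ε := by ring

/-- Consequence of Lemma 3: for `η` bounded, locally integrable with ergodic average
`⟨η⟩ = Lη`, `J` bounded and locally integrable, `w` continuously differentiable on
`[0,1]` (with derivative `w'`), and `tau : (0,∞) → ℝ` with `0 ≤ tau T ≤ T`, the scaled
accumulated dilation `(1/T)∫_{tau T}^t η` may be replaced by `⟨η⟩(t − tau T)/T` inside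
the windowed integral without changing the limit:
`lim_{T→∞} [ (1/T)∫₀ᵀ w'(t/T)·(1/T)(∫_{tau T}^t η)·J(t) dt
  − ⟨η⟩·(1/T)∫₀ᵀ w'(t/T)·((t − tau T)/T)·J(t) dt ] = 0`. -/
theorem windowed_integral_replace_dilation_by_linear
    (η J w w' : ℝ → ℝ) (tau : ℝ → ℝ) (Lη : ℝ)
    (hηb : ∃ B : ℝ, ∀ t : ℝ, |η t| ≤ B)
    (hηloc : LocallyIntegrable η)
    (hη : Tendsto (fun T : ℝ => (1 / T) * ∫ τ in (0:ℝ)..T, η τ) atTop (nhds Lη))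
    (hJb : ∃ B : ℝ, ∀ t : ℝ, |J t| ≤ B)
    (hJloc : LocallyIntegrable J)
    (hw : ∀ s ∈ Icc (0:ℝ) 1, HasDerivWithinAt w (w' s) (Icc (0:ℝ) 1) s)
    (hw'c : ContinuousOn w' (Icc (0:ℝ) 1))
    (htau0 : ∀ T : ℝ, 0 < T → 0 ≤ tau T ∧ tau T ≤ T) :
    Tendsto (fun T : ℝ =>
        (1 / T) * (∫ t in (0:ℝ)..T,
            w' (t / T) * ((1 / T) * ∫ τ in tau T..t, η τ) * J t)
          - Lη * ((1 / T) * ∫ t in (0:ℝ)..T, w' (t / T) * ((t - tau T) / T) * J t))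
      atTop (nhds 0) :=
  windowed_integral_replace_dilation_by_linear_general η J w' tau Lη hηloc hη hJb hJloc hw'c htau0
end
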